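/- arXiv:2112.13847 — 4 statements merged into one kernel-verified Lean document; each statement's English description precedes it below -/
import Mathlib

section
/- Let V be a type, S a finite set of edges (Finset (Sym2 V)), and let l be an edge-simple path (nonempty duplicate-free list of edges in which every two consecutive entries share a vertex) all of whose edges lie in S, with first edge v and last edge u. Then for every natural number k with 1 ≤ k ≤ S.card, there exist a subset S' ⊆ S with S'.card = k, an edge y ∈ S', and edge-simple paths l₁ and l₂ such that: every edge of l₁ lies in S', l₁ has first edge v and last edge y; every edge of l₂ lies in (S \ S') ∪ {y}, l₂ has first edge y and last edge u; and l₁.length + l₂.length − 1 = l.length. -/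
/-- Two edges share a vertex. -/
def SharesVertex {V : Type*} (e f : Sym2 V) : Prop := ∃ x, x ∈ e ∧ x ∈ f

/-- An edge-simple path (trail): a nonempty duplicate-free list of edges in which
every two consecutive entries share a vertex. -/
def IsTrail {V : Type*} (l : List (Sym2 V)) : Prop :=
  l ≠ [] ∧ l.Nodup ∧ l.Chain' (fun e f => ∃ x, x ∈ e ∧ x ∈ f)

/-!
Cut the trail `l` at its `j`-th edge `y`, where `j = min k |l|`: the prefix ending in `y` and
the suffix starting at `y` are trails sharing exactly the edge `y`. Take for `S'` the `j` edges
of the prefix, padded with `k - j` edges of `S` outside `l`; then no edge of the suffix after `y`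
lies in `S'`.
-/

theorem IsTrail.of_infix {V : Type*} {l l' : List (Sym2 V)} (hl : IsTrail l) (h : l' <:+: l)
    (hne : l' ≠ []) : IsTrail l' :=
  ⟨hne, hl.2.1.sublist h.sublist, hl.2.2.infix h⟩

theorem List.exists_eq_append_cons_of_lt_length {α : Type*} {l : List α} {i : ℕ}
    (hi : i < l.length) : ∃ p y q, l = p ++ y :: q ∧ p.length = i :=
  ⟨l.take i, l[i], l.drop (i + 1), by rw [List.getElem_cons_drop, List.take_append_drop],
    by simp; omega⟩

theorem Finset.exists_subsuperset_card_eq_of_disjoint {α : Type*} [DecidableEq α]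
    {A B S : Finset α} {k : ℕ} (hA : A ⊆ S) (hB : B ⊆ S) (hAB : Disjoint A B)
    (hAk : A.card ≤ k) (hkS : k + B.card ≤ S.card) :
    ∃ S', A ⊆ S' ∧ S' ⊆ S ∧ Disjoint S' B ∧ S'.card = k := by
  obtain ⟨S', hAS', hS'S, hS'k⟩ :=
    exists_subsuperset_card_eq (subset_sdiff.mpr ⟨hA, hAB⟩) hAk
      (by rw [card_sdiff_of_subset hB]; omega)
  exact ⟨S', hAS', hS'S.trans sdiff_subset, (subset_sdiff.mp hS'S).2, hS'k⟩

theorem split_trail {V : Type*} [DecidableEq V] (S : Finset (Sym2 V)) (v u : Sym2 V)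
    (l : List (Sym2 V)) (hl : IsTrail l) (hlS : ∀ e ∈ l, e ∈ S)
    (hhead : l.head? = some v) (hlast : l.getLast? = some u)
    (k : ℕ) (hk1 : 1 ≤ k) (hk2 : k ≤ S.card) :
    ∃ S' ⊆ S, S'.card = k ∧ ∃ y ∈ S', ∃ l₁ l₂ : List (Sym2 V),
      IsTrail l₁ ∧ (∀ e ∈ l₁, e ∈ S') ∧
        l₁.head? = some v ∧ l₁.getLast? = some y ∧
      IsTrail l₂ ∧ (∀ e ∈ l₂, e ∈ (S \ S') ∪ {y}) ∧
        l₂.head? = some y ∧ l₂.getLast? = some u ∧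
      l₁.length + l₂.length - 1 = l.length := by
  have hsub {l' : List (Sym2 V)} (h : l' ⊆ l) : l'.toFinset ⊆ S :=
    fun e he => hlS e (h (List.mem_toFinset.mp he))
  have hnS : l.length ≤ S.card := by
    rw [← List.toFinset_card_of_nodup hl.2.1]
    exact Finset.card_le_card (hsub (List.Subset.refl l))
  have hn : 0 < l.length := List.length_pos_iff.mpr hl.1
  obtain ⟨p, y, q, rfl, hp⟩ :=
    List.exists_eq_append_cons_of_lt_length (l := l) (i := min k l.length - 1) (by omega)
  have hsplit : p ++ y :: q = (p ++ [y]) ++ q := by simp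
  obtain ⟨hnd₁, hnd₂, hdisj⟩ := List.nodup_append'.mp (hsplit ▸ hl.2.1)
  obtain ⟨S', hpS', hS'S, hS'q, hS'card⟩ :=
    Finset.exists_subsuperset_card_eq_of_disjoint (k := k) (hsub (by simp)) (hsub (by simp))
      (List.disjoint_toFinset_iff_disjoint.mpr hdisj)
      (by rw [List.toFinset_card_of_nodup hnd₁]; simp at hp ⊢; omega)
      (by rw [List.toFinset_card_of_nodup hnd₂]; simp at hp hnS; omega)
  refine ⟨S', hS'S, hS'card, y, hpS' (by simp), p ++ [y], y :: q,
    hl.of_infix (hsplit ▸ (List.prefix_append _ _).isInfix) (by simp),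
    fun e he => hpS' (List.mem_toFinset.mpr he), by rw [← hhead]; cases p <;> rfl, by simp,
    hl.of_infix (List.suffix_append _ _).isInfix (by simp), ?_, rfl,
    by rw [← hlast, List.getLast?_append_of_ne_nil _ (List.cons_ne_nil _ _)], by simp; omega⟩
  intro e he
  rcases List.mem_cons.mp he with rfl | he
  · exact Finset.mem_union_right _ (Finset.mem_singleton_self _)
  · refine Finset.mem_union_left _ (Finset.mem_sdiff.mpr ⟨hlS e (by simp [he]), ?_⟩)
    exact fun heS' => Finset.disjoint_left.mp hS'q heS' (List.mem_toFinset.mpr he)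
end

section
/- Let V be a type and S a finite set of edges (Finset (Sym2 V)). For a set T of edges and edges v, u define L(T,v,u) := sSup {n : ℕ | ∃ edge-simple path l with all edges of l in T, first edge v, last edge u, and l.length = n}. Suppose v, u ∈ S, k is a natural number with 1 ≤ k ≤ S.card, and there exists at least one edge-simple path all of whose edges lie in S with first edge v and last edge u. Then L(S,v,u) = sSup {n : ℕ | ∃ S' ⊆ S with S'.card = k, ∃ y ∈ S', ∃ edge-simple paths l₁, l₂ such that all edges of l₁ lie in S' with first edge v and last edge y, all edges of l₂ lie in (S \ S') ∪ {y} with first edge y and last edge u, and n = l₁.length + l₂.length − 1}. -/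
/-- `L T v u` is the length of the longest edge-simple path using only edges
from `T`, starting at edge `v` and finishing at edge `u`. -/
noncomputable def L {V : Type*} (T : Set (Sym2 V)) (v u : Sym2 V) : ℕ :=
  sSup {n : ℕ | ∃ l : List (Sym2 V), IsTrail l ∧ (∀ e ∈ l, e ∈ T) ∧
    l.head? = some v ∧ l.getLast? = some u ∧ l.length = n}

namespace List

variable {α : Type*} {l₁ l₂ : List α}

theorem head?_append_tail (h₁ : l₁ ≠ []) : (l₁ ++ l₂.tail).head? = l₁.head? := by
  obtain ⟨a, t, rfl⟩ := exists_cons_of_ne_nil h₁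
  rfl

theorem getLast?_append_tail (h : l₁.getLast? = l₂.head?) :
    (l₁ ++ l₂.tail).getLast? = l₂.getLast? := by
  rcases l₂ with _ | ⟨a, t⟩
  · simpa using h
  · rcases t.eq_nil_or_concat with rfl | ⟨t, b, rfl⟩
    · simpa using h
    · rw [concat_eq_append, tail_cons, ← append_assoc, ← cons_append, getLast?_concat,
        getLast?_concat]

theorem length_append_tail (h₂ : l₂ ≠ []) :
    (l₁ ++ l₂.tail).length = l₁.length + l₂.length - 1 := by
  have := length_pos_iff.2 h₂
  simp only [length_append, length_tail]
  omega

theorem mem_sdiff_of_mem_tail [DecidableEq α] {S S' : Finset α} {y : α} (h₂ : l₂.Nodup)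
    (hy : l₂.head? = some y) (hS : ∀ e ∈ l₂, e ∈ (S \ S') ∪ {y}) {e : α} (he : e ∈ l₂.tail) :
    e ∈ S \ S' := by
  obtain ⟨a, t, rfl⟩ := exists_cons_of_ne_nil (ne_nil_of_mem (mem_of_mem_tail he))
  obtain rfl : a = y := by simpa using hy
  have hey : e ≠ a := fun h => (nodup_cons.1 h₂).1 (h ▸ he)
  simpa [hey] using hS e (mem_cons_of_mem _ he)

theorem Nodup.length_le_card_of_subset [DecidableEq α] {S : Finset α} {l : List α}
    (hl : l.Nodup) (hS : ∀ e ∈ l, e ∈ S) : l.length ≤ S.card :=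
  toFinset_card_of_nodup hl ▸ Finset.card_le_card fun e he => hS e (mem_toFinset.1 he)

theorem Nodup.exists_take_subset_card_eq [DecidableEq α] {S : Finset α} {l : List α}
    (hl : l.Nodup) (hS : ∀ e ∈ l, e ∈ S) {m k : ℕ} (hmk : m ≤ k)
    (hk : k + (l.length - m) ≤ S.card) :
    ∃ S' : Finset α, (l.take m).toFinset ⊆ S' ∧ S' ⊆ S \ (l.drop m).toFinset ∧ S'.card = k := by
  have hsplit := nodup_append.1 (take_append_drop m l ▸ hl)
  have hdrop : (l.drop m).toFinset ⊆ S := fun e he => hS e (drop_subset _ _ (mem_toFinset.1 he))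
  refine Finset.exists_subsuperset_card_eq (fun e he => Finset.mem_sdiff.2
    ⟨hS e (take_subset _ _ (mem_toFinset.1 he)),
      fun he' => hsplit.2.2 e (mem_toFinset.1 he) e (mem_toFinset.1 he') rfl⟩) ?_ ?_
  · rw [toFinset_card_of_nodup hsplit.1, length_take]
    omega
  · rw [Finset.card_sdiff_of_subset hdrop, toFinset_card_of_nodup hsplit.2.1, length_drop]
    omega

end List

namespace IsTrail

variable {V : Type*} {l l₁ l₂ : List (Sym2 V)}

theorem take (hl : IsTrail l) {m : ℕ} (hm : m ≠ 0) : IsTrail (l.take m) :=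
  ⟨by simp [List.take_eq_nil_iff, hm, hl.1], hl.2.1.sublist (List.take_sublist _ _),
    hl.2.2.prefix (List.take_prefix _ _)⟩

theorem drop (hl : IsTrail l) {m : ℕ} (hm : m < l.length) : IsTrail (l.drop m) :=
  ⟨by simpa [List.drop_eq_nil_iff] using hm, hl.2.1.sublist (List.drop_sublist _ _),
    hl.2.2.suffix (List.drop_suffix _ _)⟩

theorem append_tail (h₁ : IsTrail l₁) (h₂ : IsTrail l₂) (hjoin : l₁.getLast? = l₂.head?)
    (hdisj : ∀ e ∈ l₁, e ∉ l₂.tail) : IsTrail (l₁ ++ l₂.tail) := by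
  obtain ⟨a, t, rfl⟩ := List.exists_cons_of_ne_nil h₂.1
  refine ⟨by simp [h₁.1], List.nodup_append.2 ⟨h₁.2.1, (List.nodup_cons.1 h₂.2.1).2, ?_⟩,
    List.isChain_append.2 ⟨h₁.2.2, h₂.2.2.tail, ?_⟩⟩
  · rintro e he₁ _ he₂ rfl
    exact hdisj e he₁ he₂
  · intro x hx b hb
    obtain rfl : a = x := by simpa [hjoin] using hx
    exact (List.isChain_cons.1 h₂.2.2).1 b hb

theorem exists_split [DecidableEq V] {S : Finset (Sym2 V)} (hl : IsTrail l)
    (hS : ∀ e ∈ l, e ∈ S) {k : ℕ} (hk1 : 1 ≤ k) (hk2 : k ≤ S.card) :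
    ∃ S' ⊆ S, S'.card = k ∧ ∃ y ∈ S', ∃ l₁ l₂ : List (Sym2 V),
      IsTrail l₁ ∧ (∀ e ∈ l₁, e ∈ S') ∧ IsTrail l₂ ∧ (∀ e ∈ l₂, e ∈ (S \ S') ∪ {y}) ∧
      l₁.getLast? = some y ∧ l₂.head? = some y ∧ l₁ ++ l₂.tail = l := by
  set m := min k l.length
  have hm0 : m ≠ 0 := by have := List.length_pos_iff.2 hl.1; omega
  have hml : m - 1 < l.length := by omega
  obtain ⟨S', htake, hS', hcard⟩ := hl.2.1.exists_take_subset_card_eq hS (m := m) (k := k)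
    (by omega) (by have := hl.2.1.length_le_card_of_subset hS; omega)
  have hcons : l.drop (m - 1) = l[m - 1] :: l.drop m := by
    rw [List.drop_eq_getElem_cons hml, Nat.sub_add_cancel (Nat.one_le_iff_ne_zero.2 hm0)]
  refine ⟨S', fun e he => (Finset.mem_sdiff.1 (hS' he)).1, hcard, l[m - 1],
    htake (List.mem_toFinset.2 (List.mem_take_iff_getElem.2 ⟨m - 1, by omega, rfl⟩)),
    l.take m, l.drop (m - 1), hl.take hm0, fun e he => htake (List.mem_toFinset.2 he),
    hl.drop hml, ?_, ?_, by rw [hcons]; rfl, by rw [hcons]; exact List.take_append_drop m l⟩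
  · intro e he
    rcases List.mem_cons.1 (hcons ▸ he) with rfl | he
    · exact Finset.mem_union_right _ (Finset.mem_singleton_self _)
    · refine Finset.mem_union_left _ (Finset.mem_sdiff.2 ⟨hS e (List.drop_subset _ _ he), ?_⟩)
      exact fun he' => (Finset.mem_sdiff.1 (hS' he')).2 (List.mem_toFinset.2 he)
  · rw [List.getLast?_take, if_neg hm0, List.getElem?_eq_getElem hml]
    rfl

end IsTrail

theorem L_split_general {V : Type*} [DecidableEq V] (S : Finset (Sym2 V)) (v u : Sym2 V)
    (k : ℕ) (hk1 : 1 ≤ k) (hk2 : k ≤ S.card) :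
    L (↑S : Set (Sym2 V)) v u =
      sSup {n : ℕ | ∃ S' ⊆ S, S'.card = k ∧ ∃ y ∈ S', ∃ l₁ l₂ : List (Sym2 V),
        IsTrail l₁ ∧ (∀ e ∈ l₁, e ∈ S') ∧
          l₁.head? = some v ∧ l₁.getLast? = some y ∧
        IsTrail l₂ ∧ (∀ e ∈ l₂, e ∈ (S \ S') ∪ {y}) ∧
          l₂.head? = some y ∧ l₂.getLast? = some u ∧
        n = l₁.length + l₂.length - 1} := by
  unfold L
  congr 1
  ext n
  constructor
  · rintro ⟨l, hl, hS, hv, hu, rfl⟩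
    obtain ⟨S', hS', hcard, y, hy, l₁, l₂, h₁, h₁S, h₂, h₂S, hy₁, hy₂, rfl⟩ :=
      hl.exists_split hS hk1 hk2
    have hjoin : l₁.getLast? = l₂.head? := hy₁.trans hy₂.symm
    exact ⟨S', hS', hcard, y, hy, l₁, l₂, h₁, h₁S, List.head?_append_tail h₁.1 ▸ hv, hy₁, h₂,
      h₂S, hy₂, List.getLast?_append_tail hjoin ▸ hu, List.length_append_tail h₂.1⟩
  · rintro ⟨S', hS', -, y, -, l₁, l₂, h₁, h₁S, hv, hy₁, h₂, h₂S, hy₂, hu, rfl⟩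
    have hjoin : l₁.getLast? = l₂.head? := hy₁.trans hy₂.symm
    have htail e (he : e ∈ l₂.tail) := List.mem_sdiff_of_mem_tail h₂.2.1 hy₂ h₂S he
    refine ⟨l₁ ++ l₂.tail, h₁.append_tail h₂ hjoin fun e he₁ he₂ =>
        (Finset.mem_sdiff.1 (htail e he₂)).2 (h₁S e he₁), ?_,
      (List.head?_append_tail h₁.1).trans hv, (List.getLast?_append_tail hjoin).trans hu,
      List.length_append_tail h₂.1⟩
    intro e he
    rcases List.mem_append.1 he with he | he
    · exact hS' (h₁S e he)
    · exact (Finset.mem_sdiff.1 (htail e he)).1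

theorem L_split {V : Type*} [DecidableEq V] (S : Finset (Sym2 V)) (v u : Sym2 V)
    (hv : v ∈ S) (hu : u ∈ S) (k : ℕ) (hk1 : 1 ≤ k) (hk2 : k ≤ S.card)
    (hex : ∃ l : List (Sym2 V), IsTrail l ∧ (∀ e ∈ l, e ∈ S) ∧
      l.head? = some v ∧ l.getLast? = some u) :
    L (↑S : Set (Sym2 V)) v u =
      sSup {n : ℕ | ∃ S' ⊆ S, S'.card = k ∧ ∃ y ∈ S', ∃ l₁ l₂ : List (Sym2 V),
        IsTrail l₁ ∧ (∀ e ∈ l₁, e ∈ S') ∧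
          l₁.head? = some v ∧ l₁.getLast? = some y ∧
        IsTrail l₂ ∧ (∀ e ∈ l₂, e ∈ (S \ S') ∪ {y}) ∧
          l₂.head? = some y ∧ l₂.getLast? = some u ∧
        n = l₁.length + l₂.length - 1} :=
  L_split_general S v u k hk1 hk2
end

section
/- Let V be a type and S a set of edges (elements of Sym2 V). For a set T of edges and edges v, u define L(T,v,u) := sSup {n : ℕ | ∃ edge-simple path l with all edges of l in T, first edge v, last edge u, and l.length = n}. Suppose u ∈ S and there exists an edge-simple path all of whose edges lie in S, with first edge v, last edge u, and length at least 2. Then L(S,v,u) = sSup {n : ℕ | ∃ y ∈ S \ {u} such that y shares a vertex with u, ∃ edge-simple path l with all edges in S \ {u}, first edge v, last edge y, and n = l.length + 1}. -/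
/-
A trail from `v` to `u` of length at least two is exactly a trail from `v` to some edge `y`
adjacent to `u` that avoids `u`, followed by `u`. So the second set is the first one cut off
below at `2`; since the first set has an element `≥ 2`, the suprema agree, also in the
unbounded case, where both are `0` by the convention for `sSup` on `ℕ`.
-/

theorem isTrail_append_singleton {V : Type*} {l : List (Sym2 V)} {y u : Sym2 V}
    (hy : l.getLast? = some y) :
    IsTrail (l ++ [u]) ↔ IsTrail l ∧ u ∉ l ∧ SharesVertex y u := by
  have hl : l ≠ [] := by rintro rfl; simp at hy
  simp only [IsTrail, List.Chain', List.isChain_append, List.nodup_append, hy,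
    List.head?_cons, Option.mem_def, Option.some.injEq, forall_eq', List.mem_singleton,
    List.nodup_singleton, List.isChain_singleton, SharesVertex, ne_eq, hl, not_false_eq_true,
    List.append_eq_nil_iff, List.cons_ne_nil, and_false, true_and, forall_eq, List.forall_mem_ne']
  tauto

theorem Nat.sSup_inter_Ici {A : Set ℕ} {k : ℕ} (h : (A ∩ Set.Ici k).Nonempty) :
    sSup (A ∩ Set.Ici k) = sSup A := by
  obtain ⟨m, hmA, hkm⟩ := h
  by_cases hA : BddAbove A
  · refine le_antisymm (csSup_le_csSup hA ⟨m, hmA, hkm⟩ Set.inter_subset_left) ?_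
    refine le_csSup (hA.mono Set.inter_subset_left) ⟨Nat.sSup_mem ⟨m, hmA⟩ hA, ?_⟩
    exact hkm.trans (le_csSup hA hmA)
  · have : ¬ BddAbove (A ∩ Set.Ici k) := fun ⟨N, hN⟩ =>
      hA ⟨max N k, fun n hn => (le_total k n).elim
        (fun hkn => (hN ⟨hn, hkn⟩).trans (le_max_left _ _))
        (fun hnk => hnk.trans (le_max_right _ _))⟩
    rw [csSup_of_not_bddAbove hA, csSup_of_not_bddAbove this]

theorem exists_trail_to_neighbor_iff {V : Type*} {S : Set (Sym2 V)} {v u : Sym2 V} (hu : u ∈ S)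
    (n : ℕ) :
    (∃ y ∈ S \ {u}, SharesVertex y u ∧
      ∃ l : List (Sym2 V), IsTrail l ∧ (∀ e ∈ l, e ∈ S \ {u}) ∧
        l.head? = some v ∧ l.getLast? = some y ∧ n = l.length + 1) ↔
    (∃ l : List (Sym2 V), IsTrail l ∧ (∀ e ∈ l, e ∈ S) ∧
      l.head? = some v ∧ l.getLast? = some u ∧ l.length = n) ∧ 2 ≤ n := by
  constructor
  · rintro ⟨y, -, hyu, l, hl, hlS, hv, hy, rfl⟩
    have hne : l ≠ [] := hl.1
    have hul : u ∉ l := fun h => (hlS u h).2 rfl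
    refine ⟨⟨l ++ [u], (isTrail_append_singleton hy).2 ⟨hl, hul, hyu⟩, ?_,
      by rwa [List.head?_append_of_ne_nil _ hne], by simp, by simp⟩, ?_⟩
    · intro e he
      rcases List.mem_append.1 he with he | he
      · exact (hlS e he).1
      · exact List.mem_singleton.1 he ▸ hu
    · have := List.length_pos_iff.2 hne
      omega
  · rintro ⟨⟨l, hl, hlS, hv, hu', rfl⟩, h2⟩
    obtain ⟨l', rfl⟩ := List.getLast?_eq_some_iff.1 hu'
    have hne : l' ≠ [] := by rintro rfl; simp at h2
    obtain ⟨y, hy⟩ : ∃ y, l'.getLast? = some y := ⟨_, List.getLast?_eq_some_getLast hne⟩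
    obtain ⟨hl', hul', hyu⟩ := (isTrail_append_singleton hy).1 hl
    have hl'S : ∀ e ∈ l', e ∈ S \ {u} :=
      fun e he => ⟨hlS e (List.mem_append_left _ he), fun h => hul' (h ▸ he)⟩
    exact ⟨y, hl'S y (List.mem_of_getLast? hy), hyu, l', hl', hl'S,
      by rwa [List.head?_append_of_ne_nil _ hne] at hv, hy, by simp⟩

theorem L_remove_last_edge {V : Type*} (S : Set (Sym2 V)) (v u : Sym2 V)
    (hu : u ∈ S)
    (hex : ∃ l : List (Sym2 V), IsTrail l ∧ (∀ e ∈ l, e ∈ S) ∧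
      l.head? = some v ∧ l.getLast? = some u ∧ 2 ≤ l.length) :
    L S v u =
      sSup {n : ℕ | ∃ y ∈ S \ {u}, SharesVertex y u ∧
        ∃ l : List (Sym2 V), IsTrail l ∧ (∀ e ∈ l, e ∈ S \ {u}) ∧
          l.head? = some v ∧ l.getLast? = some y ∧ n = l.length + 1} := by
  obtain ⟨l, hl, hlS, hv, hu', h2⟩ := hex
  rw [L, ← Nat.sSup_inter_Ici (k := 2) ?_]
  · congr 1
    ext n
    exact (exists_trail_to_neighbor_iff hu n).symm
  · exact ⟨l.length, ⟨l, hl, hlS, hv, hu', rfl⟩, h2⟩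
end

section
/- For all natural numbers t and k with (k : ℝ) ≤ 0.055 * t, Real.sqrt (Nat.choose (4*t) (2*t)) * Real.sqrt (Nat.choose (2*t) t) * Real.sqrt (Nat.choose t k) ≤ 1.728 ^ (4*t). -/
/-! Bound the two central binomial coefficients by `2 ^ (4 * t)` and `2 ^ (2 * t)`, and the
third by the generating-function bound `C(t, k) ≤ (1 + x) ^ t / x ^ k` at `x = 3 / 50`. The
square of the left-hand side is then at most `67.84 ^ t * (50 / 3) ^ k`. Since `200 k ≤ 11 t`,
comparing 200th powers reduces the claim to the numerical inequality
`67.84 ^ 200 * (50 / 3) ^ 11 ≤ 1.728 ^ 1600`. -/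

theorem Nat.choose_mul_pow_le_add_one_pow {R : Type*} [CommSemiring R] [PartialOrder R]
    [IsOrderedRing R] (n k : ℕ) {x : R} (hx : 0 ≤ x) :
    (n.choose k : R) * x ^ k ≤ (x + 1) ^ n := by
  rcases le_or_gt k n with hkn | hnk
  · rw [add_pow]
    simp only [one_pow, mul_one]
    calc (n.choose k : R) * x ^ k = x ^ k * n.choose k := mul_comm _ _
      _ ≤ ∑ i ∈ Finset.range (n + 1), x ^ i * n.choose i :=
        Finset.single_le_sum (f := fun i => x ^ i * (n.choose i : R))
          (fun i _ => mul_nonneg (pow_nonneg hx i) (Nat.cast_nonneg _))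
          (Finset.mem_range.mpr (Nat.lt_succ_of_le hkn))
  · rw [Nat.choose_eq_zero_of_lt hnk, Nat.cast_zero, zero_mul]
    exact pow_nonneg (add_nonneg hx zero_le_one) n

theorem Nat.choose_le_add_one_pow_mul_inv_pow {K : Type*} [Semifield K] [LinearOrder K]
    [IsStrictOrderedRing K] (n k : ℕ) {x : K} (hx : 0 < x) :
    (n.choose k : K) ≤ (x + 1) ^ n * x⁻¹ ^ k := by
  rw [inv_pow, ← div_eq_mul_inv, le_div_iff₀ (pow_pos hx k)]
  exact Nat.choose_mul_pow_le_add_one_pow n k hx.le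

theorem pow_mul_pow_le_pow_of_pow_mul_pow_le {R : Type*} [CommSemiring R] [LinearOrder R]
    [IsStrictOrderedRing R] {a b c : R} {p q t k : ℕ} (ha : 0 ≤ a) (hb : 1 ≤ b) (hc : 0 ≤ c)
    (hp : p ≠ 0) (hkt : p * k ≤ q * t) (habc : a ^ p * b ^ q ≤ c ^ p) :
    a ^ t * b ^ k ≤ c ^ t := by
  refine (pow_le_pow_iff_left₀ (by positivity) (by positivity) hp).mp ?_
  calc (a ^ t * b ^ k) ^ p = a ^ (t * p) * b ^ (p * k) := by
        rw [mul_pow, ← pow_mul, ← pow_mul, mul_comm k]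
    _ ≤ a ^ (t * p) * b ^ (q * t) := by gcongr
    _ = (a ^ p * b ^ q) ^ t := by rw [mul_pow, ← pow_mul, ← pow_mul, mul_comm t, mul_comm q]
    _ ≤ (c ^ p) ^ t := by gcongr
    _ = (c ^ t) ^ p := by rw [← pow_mul, ← pow_mul, mul_comm]

theorem sqrt_choose_prod_le_pow_step2 (t k : ℕ) (h : (k : ℝ) ≤ 0.055 * t) :
    Real.sqrt (Nat.choose (4 * t) (2 * t)) * Real.sqrt (Nat.choose (2 * t) t) *
      Real.sqrt (Nat.choose t k) ≤ 1.728 ^ (4 * t) := by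
  have hkt : 200 * k ≤ 11 * t := by exact_mod_cast (by linarith : (200 * k : ℝ) ≤ 11 * t)
  have hprod : (Nat.choose (4 * t) (2 * t) : ℝ) * Nat.choose (2 * t) t * Nat.choose t k ≤
      (1.728 ^ 8) ^ t :=
    calc (Nat.choose (4 * t) (2 * t) : ℝ) * Nat.choose (2 * t) t * Nat.choose t k
        ≤ 2 ^ (4 * t) * 2 ^ (2 * t) * ((3 / 50 + 1) ^ t * (3 / 50)⁻¹ ^ k) := by
          gcongr
          · exact_mod_cast Nat.choose_le_two_pow _ _
          · exact_mod_cast Nat.choose_le_two_pow _ _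
          · exact Nat.choose_le_add_one_pow_mul_inv_pow t k (by norm_num)
      _ = 67.84 ^ t * (50 / 3) ^ k := by
          rw [pow_mul, pow_mul, ← mul_assoc, ← mul_pow, ← mul_pow]; norm_num
      _ ≤ (1.728 ^ 8) ^ t :=
          pow_mul_pow_le_pow_of_pow_mul_pow_le (by norm_num) (by norm_num) (by norm_num)
            (by norm_num) hkt (by norm_num)
  rw [← Real.sqrt_mul (Nat.cast_nonneg _), ← Real.sqrt_mul (by positivity),
    Real.sqrt_le_left (by positivity)]
  exact hprod.trans_eq (by rw [← pow_mul, ← pow_mul]; ring_nf)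
end
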